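/- arXiv:0905.4217 — 3 statements merged into one kernel-verified Lean document; each statement's English description precedes it below -/
import Mathlib

section
/- For any primes N > 3 and odd p such that p divides N - 1, there exists an odd prime ℓ, with ℓ ≠ N, such that ℓ is not a p-th power modulo N and (ℓ - 1)/2 is not congruent to 0 modulo p. -/
/-- Existence of good primes: for a prime `N > 3` and an odd prime `p` dividing `N - 1`,
there is an odd prime `ℓ ≠ N` that is not a `p`-th power modulo `N` and with
`(ℓ - 1)/2` not divisible by `p`. -/
theorem stmt4 (N p : ℕ) (hN : N.Prime) (hN3 : 3 < N) (hp : p.Prime) (hpodd : Odd p)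
    (hdvd : p ∣ N - 1) :
    ∃ ℓ : ℕ, ℓ.Prime ∧ Odd ℓ ∧ ℓ ≠ N ∧
      (¬ ∃ x : ZMod N, x ^ p = (ℓ : ZMod N)) ∧ ¬ (p ∣ (ℓ - 1) / 2) := by
  haveI : Fact N.Prime := ⟨hN⟩
  haveI : Fact p.Prime := ⟨hp⟩
  have hNpos : 0 < N := hN.pos
  have hp2 : 2 ≤ p := hp.two_le
  -- find a non-p-th-power unit mod N
  have hcard : p ∣ Fintype.card (ZMod N)ˣ := by
    rwa [ZMod.card_units_eq_totient, Nat.totient_prime hN]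
  obtain ⟨g, hg⟩ := exists_prime_orderOf_dvd_card p hcard
  have hginj : ¬ Function.Injective (fun v : (ZMod N)ˣ => v ^ p) := by
    intro h
    have h1 : g ^ p = (1 : (ZMod N)ˣ) ^ p := by
      simp [← hg, pow_orderOf_eq_one]
    have := h h1
    simp [this] at hg
    omega
  have hsurj : ¬ Function.Surjective (fun v : (ZMod N)ˣ => v ^ p) := by
    intro h
    exact hginj (Finite.injective_iff_surjective.mpr h)
  obtain ⟨u, hu⟩ : ∃ u : (ZMod N)ˣ, ∀ v : (ZMod N)ˣ, v ^ p ≠ u := by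
    by_contra h
    push_neg at h
    exact hsurj fun u => h u
  -- coprimality
  have hpN : p ≠ N := by
    have h1 : p ≤ N - 1 := Nat.le_of_dvd (by omega) hdvd
    omega
  have hco : Nat.Coprime (2 * p) N := by
    apply Nat.Coprime.mul
    · exact (Nat.coprime_primes Nat.prime_two hN).mpr (by omega)
    · exact (Nat.coprime_primes hp hN).mpr hpN
  haveI : NeZero (2 * p * N) := ⟨by positivity⟩
  set e := ZMod.chineseRemainder hco with he
  set a : ZMod (2 * p * N) := e.symm (-1, (u : ZMod N)) with ha
  have haunit : IsUnit a := by
    have h1 : IsUnit ((-1, (u : ZMod N)) : ZMod (2 * p) × ZMod N) := by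
      exact ⟨MulEquiv.prodUnits.symm (-1, u), rfl⟩
    exact h1.map e.symm
  obtain ⟨ℓ, hℓN, hℓprime, hℓa⟩ := Nat.forall_exists_prime_gt_and_eq_mod haunit N
  have hcomp : ((ℓ : ZMod (2 * p)), (ℓ : ZMod N)) = (-1, (u : ZMod N)) := by
    have h1 := congrArg e hℓa
    rw [ha, RingEquiv.apply_symm_apply] at h1
    rw [← h1, map_natCast]
    rfl
  have hmod2p : (ℓ : ZMod (2 * p)) = -1 := by
    have := congrArg Prod.fst hcomp; simpa using this
  have hmodN : (ℓ : ZMod N) = (u : ZMod N) := by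
    have := congrArg Prod.snd hcomp; simpa using this
  -- turn hmod2p into a statement about ℓ % (2*p)
  have hcast : ((2 * p - 1 : ℕ) : ZMod (2 * p)) = -1 := by
    have : ((2 * p : ℕ) : ZMod (2 * p)) = 0 := ZMod.natCast_self _
    push_cast [Nat.cast_sub (by omega : 1 ≤ 2 * p)] at this ⊢
    rw [this]; ring
  have hmod : ℓ % (2 * p) = 2 * p - 1 := by
    have h2 : (ℓ : ZMod (2 * p)) = ((2 * p - 1 : ℕ) : ZMod (2 * p)) := by
      rw [hmod2p, hcast]
    have h3 := (ZMod.natCast_eq_natCast_iff _ _ _).mp h2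
    have h4 : (2 * p - 1) % (2 * p) = 2 * p - 1 := Nat.mod_eq_of_lt (by omega)
    unfold Nat.ModEq at h3
    omega
  set k := ℓ / (2 * p) with hk
  have heq : ℓ = 2 * (p * k) + (2 * p - 1) := by
    have h6 := Nat.div_add_mod ℓ (2 * p)
    rw [← hk] at h6
    have h7 : 2 * p * k = 2 * (p * k) := by ring
    omega
  refine ⟨ℓ, hℓprime, ⟨p * k + p - 1, by omega⟩, by omega, ?_, ?_⟩
  · rintro ⟨x, hx⟩
    rw [hmodN] at hx
    have hxu : IsUnit x := by
      have : IsUnit (x ^ p) := hx ▸ u.isUnit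
      exact (isUnit_pow_iff (by omega)).mp this
    obtain ⟨v, rfl⟩ := hxu
    exact hu v (Units.ext (by exact_mod_cast hx))
  · intro hdd
    have hdiv : (ℓ - 1) / 2 = p * k + (p - 1) := by omega
    rw [hdiv] at hdd
    have h5 : p ∣ (p * k + (p - 1)) - p * k := Nat.dvd_sub hdd (Dvd.intro k rfl)
    have h6 : (p * k + (p - 1)) - p * k = p - 1 := by omega
    rw [h6] at h5
    have := Nat.le_of_dvd (by omega) h5
    omega
end

section
/- Let M be a finitely generated abelian group and η : M → M a group endomorphism whose kernel is finite. Then the cokernel M/η(M) has cardinality at least that of ker η; in particular, if the cokernel is finite of cardinality equal to |ker η|, then any surjection from M/η(M) onto a group of cardinality |ker η| is an isomorphism. -/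
/-!
Let `T` be the torsion subgroup of `M`; it is finite, contains `ker η`, and satisfies
`η⁻¹(T) = T` because `ker η` is torsion. For the endomorphism `η|_T` of the finite group `T`,
first isomorphism theorem counting gives `|ker η| = [T : η(T)]`, and `η(T) = η(M) ∩ T`, so
`T / η(T)` is a subgroup of `M / η(M)`. The cokernel is finite since by rank–nullity it has
rank `0`, i.e. it is a finitely generated torsion group.
-/

open AddCommGroup

theorem LinearMap.isTorsion_quotient_range_of_isTorsion_ker {R M : Type*} [CommRing R]
    [IsDomain R] [AddCommGroup M] [Module R M] [Module.Finite R M] (f : M →ₗ[R] M)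
    (hf : Module.IsTorsion R (LinearMap.ker f)) :
    Module.IsTorsion R (M ⧸ LinearMap.range f) := by
  rw [← Module.rank_eq_zero_iff_isTorsion]
  have hrange : Module.rank R (LinearMap.range f) = Module.rank R M := by
    simpa [hf.rank_eq_zero] using f.rank_range_add_rank_ker
  refine Cardinal.eq_of_add_eq_add_right (b := Module.rank R (LinearMap.range f)) ?_ ?_
  · rw [Submodule.rank_quotient_add_rank, zero_add, hrange]
  · exact hrange ▸ Module.rank_lt_aleph0 R M

theorem AddCommGroup.finite_torsion (M : Type*) [AddCommGroup M] [AddGroup.FG M] :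
    Finite (torsion M) := by
  have : Module.Finite ℤ M := Module.Finite.iff_addGroup_fg.mpr ‹_›
  have : AddGroup.FG (torsion M) := Module.Finite.iff_addGroup_fg.mp
    (inferInstanceAs (Module.Finite ℤ (torsion M).toIntSubmodule))
  exact finite_of_fg_isAddTorsion _ AddCommMonoid.addTorsion.isAddTorsion

namespace AddMonoidHom

variable {G H : Type*}

theorem card_ker_eq_index_range [AddGroup G] [Finite G] (f : G →+ G) :
    Nat.card f.ker = f.range.index := by
  have hker := f.ker.card_mul_index
  rw [AddSubgroup.index_ker] at hker
  refine Nat.eq_of_mul_eq_mul_left (Nat.card_pos (α := f.range)) ?_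
  rw [mul_comm, hker, f.range.card_mul_index]

/-- `f` restricts to an endomorphism of `T` whose image is `f(G) ∩ T`. -/
theorem card_ker_eq_relIndex_range [AddGroup G] (f : G →+ G) (T : AddSubgroup G) [Finite T]
    (hker : f.ker ≤ T) (hT : T.comap f = T) : Nat.card f.ker = f.range.relIndex T := by
  let g : T →+ T := (f.comp T.subtype).codRestrict T fun x ↦ hT.ge x.2
  have hg_ker : g.ker = f.ker.addSubgroupOf T := by
    ext x
    simp only [g, mem_ker, AddSubgroup.mem_addSubgroupOf]
    exact Subtype.ext_iff
  have hg_range : g.range = f.range.addSubgroupOf T := by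
    ext ⟨t, ht⟩
    simp only [g, mem_range, AddSubgroup.mem_addSubgroupOf, Subtype.ext_iff, Subtype.exists]
    exact ⟨fun ⟨x, _, hx⟩ ↦ ⟨x, hx⟩, fun ⟨x, hx⟩ ↦ ⟨x, hT.le (hx ▸ ht : f x ∈ T), hx⟩⟩
  calc Nat.card f.ker = Nat.card (f.ker.addSubgroupOf T) :=
        (Nat.card_congr (AddSubgroup.addSubgroupOfEquivOfLe hker).toEquiv).symm
    _ = g.range.index := by rw [← hg_ker, g.card_ker_eq_index_range]
    _ = f.range.relIndex T := by rw [hg_range]; rfl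

theorem comap_torsion_of_ker_le_torsion [AddCommGroup G] [AddCommGroup H] (f : G →+ H)
    (hf : f.ker ≤ torsion G) : (torsion H).comap f = torsion G := by
  refine le_antisymm (fun x hx ↦ ?_) (le_comap_torsion f)
  obtain ⟨n, hn, hnx⟩ := ((mem_torsion _).mp hx).exists_nsmul_eq_zero
  have : n • x ∈ f.ker := by rw [mem_ker, map_nsmul, hnx]
  exact (mem_torsion x).mpr (((mem_torsion _).mp (hf this)).of_nsmul hn.ne')

variable [AddCommGroup G] [AddGroup.FG G] (f : G →+ G)

theorem finite_quotient_range (hf : IsAddTorsion f.ker) : Finite (G ⧸ f.range) := by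
  have : Module.Finite ℤ G := Module.Finite.iff_addGroup_fg.mpr ‹_›
  exact finite_of_fg_isAddTorsion _ <| isAddTorsion_iff_isTorsion_int.mpr <|
    f.toIntLinearMap.isTorsion_quotient_range_of_isTorsion_ker
      (isAddTorsion_iff_isTorsion_int.mp hf)

theorem card_ker_dvd_card_quotient_range (hf : IsAddTorsion f.ker) :
    Nat.card f.ker ∣ Nat.card (G ⧸ f.range) := by
  have := finite_torsion G
  have hker : f.ker ≤ torsion G := fun x hx ↦
    (mem_torsion x).mpr (f.ker.subtype.isOfFinAddOrder (hf ⟨x, hx⟩))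
  rw [f.card_ker_eq_relIndex_range _ hker (f.comap_torsion_of_ker_le_torsion hker)]
  exact f.range.relIndex_dvd_index_of_normal _

end AddMonoidHom

/-- For a finitely generated abelian group `M` and an endomorphism `η` with finite
kernel, the cokernel has cardinality at least that of the kernel; in particular, if the
cokernel is finite of cardinality `|ker η|`, any surjection from it onto a group of
cardinality `|ker η|` is bijective. -/
theorem stmt5 (M : Type*) [AddCommGroup M] [AddGroup.FG M] (η : M →+ M)
    (hker : Finite ↥η.ker) :
    Nat.card ↥η.ker ≤ Nat.card (M ⧸ η.range) ∧
    (∀ (H : Type) (_ : AddCommGroup H) (f : (M ⧸ η.range) →+ H),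
      Finite (M ⧸ η.range) → Nat.card (M ⧸ η.range) = Nat.card ↥η.ker →
      Nat.card H = Nat.card ↥η.ker → Function.Surjective f → Function.Bijective f) := by
  refine ⟨?_, fun H _ f _ hcoker hH hf ↦
    (Nat.bijective_iff_surjective_and_card f).mpr ⟨hf, hcoker.trans hH.symm⟩⟩
  have hker_torsion : IsAddTorsion η.ker := isAddTorsion_of_finite
  have := η.finite_quotient_range hker_torsion
  exact Nat.le_of_dvd Nat.card_pos (η.card_ker_dvd_card_quotient_range hker_torsion)
end

section
/- Let G, H, K be abelian groups with an exact sequence 0 → A → G →^φ G → H with im(induced map G → H) ⊆ H, where A is finite, G is finitely generated, and H is finite with |H| = |A|. Then the induced map G/φ(G) → H is surjective (hence bijective). -/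
/-!
The kernel of `φ` is finite, hence lies in the torsion subgroup `T` of `G`, which is finite since
`G` is finitely generated; moreover `φ⁻¹(T) = T`. So `φ` restricts to an endomorphism of the
finite group `T` with kernel `ker φ`, whence `|T / φ(T)| = |ker φ|`. As `φ(G) ∩ T = φ(T)`, the
group `T / φ(T)` embeds into `G / φ(G)`, so `|ker φ|` divides `|G / φ(G)|`. The induced map
`G / φ(G) → H` is injective by exactness, and `|H| = |ker φ|` forces it to be bijective.
-/

namespace AddCommGroup

theorem finite_torsion_of_fg (G : Type*) [AddCommGroup G] [AddGroup.FG G] :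
    Finite (torsion G) := by
  have : Module.Finite ℤ G := Module.Finite.iff_addGroup_fg.mpr ‹_›
  have : Module.Finite ℤ (Submodule.torsion ℤ G) :=
    Module.Finite.iff_fg.mpr (IsNoetherian.noetherian _)
  rw [← Submodule.torsion_int]
  exact Module.finite_of_fg_torsion _ (Submodule.torsion_isTorsion ..)

theorem ker_le_torsion_of_finite {G H : Type*} [AddCommGroup G] [AddGroup H] (φ : G →+ H)
    [Finite φ.ker] : φ.ker ≤ torsion G :=
  fun x hx => AddSubmonoid.isOfFinAddOrder_coe.mpr (isOfFinAddOrder_of_finite (⟨x, hx⟩ : φ.ker))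

theorem comap_torsion_of_ker_le {G H : Type*} [AddCommGroup G] [AddCommGroup H] {φ : G →+ H}
    (hφ : φ.ker ≤ torsion G) : (torsion H).comap φ = torsion G := by
  refine le_antisymm (fun x hx => ?_) (le_comap_torsion φ)
  obtain ⟨n, hn, hnx⟩ := isOfFinAddOrder_iff_nsmul_eq_zero.mp (show IsOfFinAddOrder (φ x) from hx)
  have hker : n • x ∈ φ.ker := by rw [AddMonoidHom.mem_ker, map_nsmul, hnx]
  exact (hφ hker : IsOfFinAddOrder (n • x)).of_nsmul hn.ne'

end AddCommGroup

theorem AddMonoidHom.relIndex_range_eq_card_ker {G : Type*} [AddGroup G] (φ : G →+ G)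
    {T : AddSubgroup G} [Finite T] (hT : T.comap φ = T) : φ.range.relIndex T = Nat.card φ.ker := by
  have hker : φ.ker ≤ T := hT ▸ fun x hx => by simp [φ.mem_ker.mp hx]
  have hmap : T.map φ ≤ T := AddSubgroup.map_le_iff_le_comap.mpr hT.ge
  have hcard_T : Nat.card T = Nat.card (T.map φ) * Nat.card φ.ker := by
    rw [← AddSubgroup.relIndex_ker, mul_comm, ← AddSubgroup.relIndex_bot_left (H := φ.ker),
      AddSubgroup.relIndex_mul_relIndex _ _ _ bot_le hker, AddSubgroup.relIndex_bot_left]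
  have hmap_pos : 0 < Nat.card (T.map φ) :=
    Nat.pos_of_ne_zero (left_ne_zero_of_mul (hcard_T ▸ Nat.card_pos.ne'))
  refine Nat.eq_of_mul_eq_mul_left hmap_pos ?_
  rw [← hcard_T, ← AddSubgroup.inf_relIndex_right, ← AddSubgroup.map_comap_eq, hT,
    ← AddSubgroup.relIndex_bot_left (H := T.map φ),
    AddSubgroup.relIndex_mul_relIndex _ _ _ bot_le hmap, AddSubgroup.relIndex_bot_left]

theorem AddMonoidHom.card_ker_dvd_index_range {G : Type*} [AddCommGroup G] [AddGroup.FG G]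
    (φ : G →+ G) [Finite φ.ker] : Nat.card φ.ker ∣ φ.range.index := by
  have := AddCommGroup.finite_torsion_of_fg G
  rw [← φ.relIndex_range_eq_card_ker
    (AddCommGroup.comap_torsion_of_ker_le (AddCommGroup.ker_le_torsion_of_finite φ))]
  exact AddSubgroup.relIndex_dvd_index_of_normal _ _

theorem stmt10_general (G H : Type*) [AddCommGroup G] [AddGroup.FG G] [AddCommGroup H]
    [Finite H] (φ : G →+ G) (i : G →+ H)
    (hcard : Nat.card H = Nat.card ↥φ.ker)
    (hex : i.ker = φ.range)
    (hi : ∀ x ∈ (φ.range : AddSubgroup G), i x = 0) :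
    Function.Surjective (QuotientAddGroup.lift φ.range i hi) ∧
    Function.Bijective (QuotientAddGroup.lift φ.range i hi) := by
  set L := QuotientAddGroup.lift φ.range i hi
  have hinj : Function.Injective L := (QuotientAddGroup.injective_lift_iff _ i hi).mpr hex.symm
  have : Finite (G ⧸ φ.range) := Finite.of_injective L hinj
  have : Finite φ.ker := Nat.finite_of_card_ne_zero (hcard ▸ Nat.card_pos.ne')
  have hker_le : Nat.card φ.ker ≤ Nat.card (G ⧸ φ.range) :=
    Nat.le_of_dvd Nat.card_pos φ.card_ker_dvd_index_range
  have hbij : Function.Bijective L :=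
    (Nat.bijective_iff_injective_and_card L).mpr
      ⟨hinj, le_antisymm (Nat.card_le_card_of_injective L hinj) (hcard ▸ hker_le)⟩
  exact ⟨hbij.surjective, hbij⟩

/-- Counting argument: if `0 → A → G → G → H` is exact with `A = ker φ` finite, `G`
finitely generated, and `H` finite of cardinality `|A|`, then the induced map
`G/φ(G) → H` is surjective, hence bijective. -/
theorem stmt10 (G H : Type*) [AddCommGroup G] [AddGroup.FG G] [AddCommGroup H]
    [Finite H] (φ : G →+ G) (i : G →+ H)
    (hker : Finite ↥φ.ker)
    (hcard : Nat.card H = Nat.card ↥φ.ker)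
    (hex : i.ker = φ.range)
    (hi : ∀ x ∈ (φ.range : AddSubgroup G), i x = 0) :
    Function.Surjective (QuotientAddGroup.lift φ.range i hi) ∧
    Function.Bijective (QuotientAddGroup.lift φ.range i hi) :=
  stmt10_general G H φ i hcard hex hi
end
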